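/- For a GMM with parameter vector μ = (μ_1,…,μ_n) and ψ̃_μ(x) = Σ_i ψ_i(x) μ_i, the projection of the KL-loss gradient onto μ satisfies ⟨∇L(μ), μ⟩ = Σ_i ⟨∇_{μ_i}L(μ), μ_i⟩ = E_{x∼N(0,I_d)}[‖ψ̃_μ(x)‖²]; in particular this projection is nonnegative. -/

import Mathlib

open MeasureTheory ProbabilityTheory Real Finset
open scoped RealInnerProductSpace BigOperators ENNReal NNReal

noncomputable def stdGaussian (d : ℕ) : Measure (EuclideanSpace ℝ (Fin d)) :=
  (Measure.pi fun _ : Fin d => gaussianReal 0 1).map ⇑(EuclideanSpace.equiv (Fin d) ℝ).symm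

noncomputable def gmmPsi {d n : ℕ} (w : Fin n → ℝ) (μ : Fin n → EuclideanSpace ℝ (Fin d))
    (i : Fin n) (x : EuclideanSpace ℝ (Fin d)) : ℝ :=
  w i * Real.exp (-‖x - μ i‖ ^ 2 / 2) / ∑ k, w k * Real.exp (-‖x - μ k‖ ^ 2 / 2)

noncomputable def psiTilde {d n : ℕ} (w : Fin n → ℝ) (μ : Fin n → EuclideanSpace ℝ (Fin d))
    (x : EuclideanSpace ℝ (Fin d)) : EuclideanSpace ℝ (Fin d) :=
  ∑ i, gmmPsi w μ i x • μ i

noncomputable def gmmPdf {d n : ℕ} (w : Fin n → ℝ) (μ : Fin n → EuclideanSpace ℝ (Fin d))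
    (x : EuclideanSpace ℝ (Fin d)) : ℝ :=
  ∑ i, w i * ((2 * Real.pi) ^ (-(d : ℝ) / 2) * Real.exp (-‖x - μ i‖ ^ 2 / 2))

noncomputable def gmmLoss {d n : ℕ} (w : Fin n → ℝ) (μ : Fin n → EuclideanSpace ℝ (Fin d)) : ℝ :=
  -∫ x, Real.log (gmmPdf w μ x / ((2 * Real.pi) ^ (-(d : ℝ) / 2) * Real.exp (-‖x‖ ^ 2 / 2)))
      ∂ stdGaussian d

noncomputable def gmmGrad {d n : ℕ} (w : Fin n → ℝ) (μ : Fin n → EuclideanSpace ℝ (Fin d))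
    (i : Fin n) : EuclideanSpace ℝ (Fin d) :=
  ∫ x, gmmPsi w μ i x • psiTilde w μ x ∂ stdGaussian d

/-! Pointwise, `∑ i, ψ_i(x) ⟪ψ̃(x), μ_i⟫ = ‖ψ̃(x)‖²`. Since `0 ≤ ψ_i ≤ 1`, every integrand is
bounded, so the finite sum over `i` may be moved inside the Gaussian expectation. -/

instance (d : ℕ) : IsProbabilityMeasure (stdGaussian d) :=
  Measure.isProbabilityMeasure_map (EuclideanSpace.equiv (Fin d) ℝ).symm.continuous.aemeasurable

theorem sum_inner_smul_sum_smul_eq_norm_sq {ι E : Type*} [Fintype ι]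
    [NormedAddCommGroup E] [InnerProductSpace ℝ E] (c : ι → ℝ) (v : ι → E) :
    ∑ i, ⟪c i • ∑ j, c j • v j, v i⟫ = ‖∑ i, c i • v i‖ ^ 2 := by
  simp_rw [real_inner_smul_left, ← real_inner_smul_right, ← inner_sum, real_inner_self_eq_norm_sq]

theorem sum_inner_integral_eq_integral_sum_inner {ι Ω E : Type*} [Fintype ι] [MeasurableSpace Ω]
    [NormedAddCommGroup E] [InnerProductSpace ℝ E] [CompleteSpace E] {P : Measure Ω}
    {f : ι → Ω → E} (hf : ∀ i, Integrable (f i) P) (v : ι → E) :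
    ∑ i, ⟪∫ x, f i x ∂P, v i⟫ = ∫ x, ∑ i, ⟪f i x, v i⟫ ∂P := by
  rw [integral_finsetSum _ fun i _ => (hf i).inner_const (v i)]
  refine Finset.sum_congr rfl fun i _ => ?_
  simp_rw [real_inner_comm (v i)]
  exact (integral_inner (hf i) (v i)).symm

section GMM

variable {d n : ℕ} (w : Fin n → ℝ) (μ : Fin n → EuclideanSpace ℝ (Fin d))

theorem gmmPsi_nonneg (hw : ∀ i, 0 < w i) (i : Fin n) (x : EuclideanSpace ℝ (Fin d)) :
    0 ≤ gmmPsi w μ i x :=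
  div_nonneg (mul_pos (hw i) (exp_pos _)).le
    (Finset.sum_nonneg fun k _ => (mul_pos (hw k) (exp_pos _)).le)

theorem gmmPsi_le_one (hw : ∀ i, 0 < w i) (i : Fin n) (x : EuclideanSpace ℝ (Fin d)) :
    gmmPsi w μ i x ≤ 1 :=
  div_le_one_of_le₀
    (Finset.single_le_sum (f := fun k => w k * exp (-‖x - μ k‖ ^ 2 / 2))
      (fun k _ => (mul_pos (hw k) (exp_pos _)).le) (Finset.mem_univ i))
    (Finset.sum_nonneg fun k _ => (mul_pos (hw k) (exp_pos _)).le)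

theorem measurable_gmmPsi (i : Fin n) : Measurable (gmmPsi w μ i) := by
  unfold gmmPsi
  fun_prop

theorem norm_psiTilde_le (hw : ∀ i, 0 < w i) (x : EuclideanSpace ℝ (Fin d)) :
    ‖psiTilde w μ x‖ ≤ ∑ i, ‖μ i‖ := by
  refine (norm_sum_le _ _).trans (Finset.sum_le_sum fun i _ => ?_)
  rw [norm_smul, Real.norm_of_nonneg (gmmPsi_nonneg w μ hw i x)]
  exact mul_le_of_le_one_left (norm_nonneg _) (gmmPsi_le_one w μ hw i x)

theorem integrable_gmmPsi_smul_psiTilde (hw : ∀ i, 0 < w i) (i : Fin n) :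
    Integrable (fun x => gmmPsi w μ i x • psiTilde w μ x) (stdGaussian d) := by
  have h_meas : Measurable (psiTilde w μ) := by
    unfold psiTilde
    exact Finset.measurable_sum _ fun k _ => (measurable_gmmPsi w μ k).smul_const (μ k)
  refine .of_bound ((measurable_gmmPsi w μ i).smul h_meas).aestronglyMeasurable (∑ k, ‖μ k‖)
    (.of_forall fun x => ?_)
  rw [norm_smul, Real.norm_of_nonneg (gmmPsi_nonneg w μ hw i x)]
  exact mul_le_of_le_one_left (norm_nonneg _) (gmmPsi_le_one w μ hw i x) |>.trans
    (norm_psiTilde_le w μ hw x)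

end GMM

theorem gradient_projection_general {d n : ℕ} (w : Fin n → ℝ) (μ : Fin n → EuclideanSpace ℝ (Fin d))
    (hw : ∀ i, 0 < w i) :
    (∑ i, ⟪gmmGrad w μ i, μ i⟫) = ∫ x, ‖psiTilde w μ x‖ ^ 2 ∂ stdGaussian d
      ∧ 0 ≤ ∑ i, ⟪gmmGrad w μ i, μ i⟫ := by
  have h_proj : (∑ i, ⟪gmmGrad w μ i, μ i⟫) = ∫ x, ‖psiTilde w μ x‖ ^ 2 ∂ stdGaussian d :=
    calc (∑ i, ⟪gmmGrad w μ i, μ i⟫)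
        = ∫ x, ∑ i, ⟪gmmPsi w μ i x • psiTilde w μ x, μ i⟫ ∂ stdGaussian d :=
          sum_inner_integral_eq_integral_sum_inner (integrable_gmmPsi_smul_psiTilde w μ hw) μ
      _ = ∫ x, ‖psiTilde w μ x‖ ^ 2 ∂ stdGaussian d :=
          integral_congr_ae (.of_forall fun x => sum_inner_smul_sum_smul_eq_norm_sq _ μ)
  exact ⟨h_proj, h_proj ▸ integral_nonneg fun x => sq_nonneg _⟩

/-- The projection of the KL-loss gradient onto `μ` equals `E[‖ψ̃_μ(x)‖²]`, hence is
nonnegative. -/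
theorem gradient_projection {d n : ℕ} (w : Fin n → ℝ) (μ : Fin n → EuclideanSpace ℝ (Fin d))
    (hw : ∀ i, 0 < w i) (hsum : ∑ i, w i = 1) :
    (∑ i, ⟪gmmGrad w μ i, μ i⟫) = ∫ x, ‖psiTilde w μ x‖ ^ 2 ∂ stdGaussian d
      ∧ 0 ≤ ∑ i, ⟪gmmGrad w μ i, μ i⟫ :=
  gradient_projection_general w μ hw
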